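/- Let Ω be a bounded Borel subset of ℝ^d and (X_k)_{k≥0} a Markov chain on Ω (with arbitrary initial distribution) whose transition kernel is exponentially contracting in W_1 with constants D ≥ 1 and θ ∈ (0,1), and let μ be its unique stationary measure. Then there is a constant C depending only on d, D and the diameter of Ω such that for every α ∈ (0,1], every k ∈ ℤ^d, and every integer n ≥ 1/(1 − θ^α), E[|μ̂_n(e_k) − μ(e_k)|²] ≤ C · |k|_∞^{2α} / ((1 − θ^α) n). -/

import Mathlib

open MeasureTheory ProbabilityTheory
open scoped ENNReal

set_option linter.unusedSectionVars false

noncomputable section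

/-- The empirical measure `μ̂_n = (1/n) ∑_{k=1}^n δ_{X_k}` of a process. -/
def empMeasure {Ω E : Type*} [MeasurableSpace Ω] [MeasurableSpace E]
    (X : ℕ → Ω → E) (n : ℕ) (ω : Ω) : Measure E :=
  (n : ℝ≥0∞)⁻¹ • ∑ k ∈ Finset.Icc 1 n, Measure.dirac (X k ω)

/-- `π` is a coupling of `ν₀` and `ν₁`. -/
def IsCoupling {E : Type*} [MeasurableSpace E] (π : Measure (E × E))
    (ν₀ ν₁ : Measure E) : Prop :=
  π.map Prod.fst = ν₀ ∧ π.map Prod.snd = ν₁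

/-- The `t`-step iterate `m^t` of a Markov kernel. -/
def kernelIter {E : Type*} [MeasurableSpace E] (κ : Kernel E E) : ℕ → Kernel E E
  | 0 => Kernel.id
  | t + 1 => (kernelIter κ t).comp κ

/-- The kernel `κ` is exponentially contracting in `W₁` on `Ωs`, with constants `D`, `θ`:
for all `x, y ∈ Ωs` and `t`, there is a coupling `π` of `m^t_x` and `m^t_y` with
`∫ ‖u − v‖ dπ ≤ D θ^t ‖x − y‖`. -/
def ExpContracting {d : ℕ} (Ωs : Set (EuclideanSpace ℝ (Fin d)))
    (κ : Kernel (EuclideanSpace ℝ (Fin d)) (EuclideanSpace ℝ (Fin d)))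
    (D θ : ℝ) : Prop :=
  ∀ x ∈ Ωs, ∀ y ∈ Ωs, ∀ t : ℕ,
    ∃ π : Measure (EuclideanSpace ℝ (Fin d) × EuclideanSpace ℝ (Fin d)),
      IsCoupling π (kernelIter κ t x) (kernelIter κ t y) ∧
      ∫ p, ‖p.1 - p.2‖ ∂π ≤ D * θ ^ t * ‖x - y‖

/-- The σ-algebra generated by `X_0, …, X_n`. -/
def chainFiltration {Ω E : Type*} [MeasurableSpace E] (X : ℕ → Ω → E) (n : ℕ) :
    MeasurableSpace Ω :=
  ⨆ i ∈ Set.Iic n, MeasurableSpace.comap (X i) inferInstance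

/-- `(X_k)_{k≥0}` is a Markov chain with transition kernel `κ` under `P`: each `X_k` is
measurable and `E[1_A(X_{k+1}) | X_0, …, X_k] = κ(X_k, A)` a.s. -/
def IsMarkovChainWith {Ω E : Type*} [MeasurableSpace Ω] [MeasurableSpace E]
    (P : Measure Ω) (κ : Kernel E E) (X : ℕ → Ω → E) : Prop :=
  (∀ n, Measurable (X n)) ∧
  ∀ (n : ℕ) (A : Set E), MeasurableSet A →
    (fun ω => (κ (X n ω) A).toReal) =ᵐ[P]
      P[fun ω => Set.indicator A (fun _ => (1:ℝ)) (X (n+1) ω) | chainFiltration X n]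

/-- The character `e_k(x) = e^{2πi k·x}` on `ℝ^d`, for `k ∈ ℤ^d`. -/
def fourierChar {d : ℕ} (k : Fin d → ℤ) (x : EuclideanSpace ℝ (Fin d)) : ℂ :=
  Complex.exp (2 * Real.pi * Complex.I * (∑ i, (k i : ℝ) * x i))

section Aux

variable {E : Type*} [MeasurableSpace E]

lemma kernelIter_succ (κ : Kernel E E) (t : ℕ) :
    kernelIter κ (t+1) = (kernelIter κ t) ∘ₖ κ := rfl

instance kernelIter_markov (κ : Kernel E E) [IsMarkovKernel κ] (t : ℕ) :
    IsMarkovKernel (kernelIter κ t) := by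
  induction t with
  | zero => rw [show kernelIter κ 0 = Kernel.id from rfl]; infer_instance
  | succ t ih => rw [kernelIter_succ]; exact Kernel.IsMarkovKernel.comp _ _

lemma kernelIter_succ_left (κ : Kernel E E) [IsMarkovKernel κ] (t : ℕ) :
    kernelIter κ (t+1) = κ ∘ₖ (kernelIter κ t) := by
  induction t with
  | zero =>
    show Kernel.id ∘ₖ κ = κ ∘ₖ Kernel.id
    rw [Kernel.id_comp, Kernel.comp_id]
  | succ t ih =>
    calc kernelIter κ (t+2) = (kernelIter κ (t+1)) ∘ₖ κ := rfl
    _ = (κ ∘ₖ kernelIter κ t) ∘ₖ κ := by rw [ih]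
    _ = κ ∘ₖ (kernelIter κ t ∘ₖ κ) := Kernel.comp_assoc _ _ _
    _ = κ ∘ₖ kernelIter κ (t+1) := rfl

variable {Ω : Type*} [MeasurableSpace Ω]

lemma chainFiltration_le (X : ℕ → Ω → E) (hX : ∀ n, Measurable (X n)) (n : ℕ) :
    chainFiltration X n ≤ ‹MeasurableSpace Ω› :=
  iSup_le fun i => iSup_le fun _ => (hX i).comap_le

lemma chainFiltration_mono (X : ℕ → Ω → E) {a b : ℕ} (hab : a ≤ b) :
    chainFiltration X a ≤ chainFiltration X b :=
  iSup_le fun i => iSup_le fun hi =>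
    le_iSup₂ (f := fun i (_ : i ∈ Set.Iic b) => MeasurableSpace.comap (X i) inferInstance)
      i (le_trans hi hab)

lemma measurableSet_chainFiltration (X : ℕ → Ω → E) (n : ℕ) {A : Set E}
    (hA : MeasurableSet A) :
    MeasurableSet[chainFiltration X n] (X n ⁻¹' A) := by
  have h : MeasurableSpace.comap (X n) inferInstance ≤ chainFiltration X n :=
    le_iSup₂ (f := fun i (_ : i ∈ Set.Iic n) => MeasurableSpace.comap (X i) inferInstance)
      n (Set.mem_Iic.2 le_rfl)
  exact h _ ⟨A, hA, rfl⟩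

variable {P : Measure Ω} [IsProbabilityMeasure P] {κ : Kernel E E} [IsMarkovKernel κ]
  {X : ℕ → Ω → E}

lemma markov_step_set (hX : IsMarkovChainWith P κ X) (n : ℕ) {B : Set Ω}
    (hB : MeasurableSet[chainFiltration X n] B) {A : Set E} (hA : MeasurableSet A) :
    ∫⁻ ω in B, κ (X n ω) A ∂P = P (X (n+1) ⁻¹' A ∩ B) := by
  have hle := chainFiltration_le X hX.1 n
  have hBm : MeasurableSet B := hle _ hB
  have hindrw : (fun ω => Set.indicator A (fun _ => (1:ℝ)) (X (n+1) ω))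
      = (X (n+1) ⁻¹' A).indicator (fun _ => (1:ℝ)) := by
    ext ω
    by_cases h : X (n+1) ω ∈ A <;> simp [Set.indicator_apply, h]
  have hInt : Integrable (fun ω => Set.indicator A (fun _ => (1:ℝ)) (X (n+1) ω)) P := by
    rw [hindrw]
    exact (integrable_const (1:ℝ)).indicator (hX.1 (n+1) hA)
  have h1 : ∫ ω in B, (κ (X n ω) A).toReal ∂P
      = ∫ ω in B, Set.indicator A (fun _ => (1:ℝ)) (X (n+1) ω) ∂P := by
    rw [integral_congr_ae (ae_restrict_of_ae (hX.2 n A hA))]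
    exact setIntegral_condExp hle hInt hB
  have h2 : ∫ ω in B, Set.indicator A (fun _ => (1:ℝ)) (X (n+1) ω) ∂P
      = (P (X (n+1) ⁻¹' A ∩ B)).toReal := by
    rw [hindrw]
    show ∫ ω in B, ((X (n+1) ⁻¹' A).indicator (fun _ => (1:ℝ))) ω ∂P = _
    rw [integral_indicator (hX.1 (n+1) hA), setIntegral_const,
      Measure.real, Measure.restrict_apply (hX.1 (n+1) hA)]
    simp
  have h3 : ∫ ω in B, (κ (X n ω) A).toReal ∂P = (∫⁻ ω in B, κ (X n ω) A ∂P).toReal := by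
    rw [integral_toReal]
    · exact ((κ.measurable_coe hA).comp (hX.1 n)).aemeasurable.restrict
    · exact ae_of_all _ fun ω => lt_of_le_of_lt prob_le_one ENNReal.one_lt_top
  have hfin1 : ∫⁻ ω in B, κ (X n ω) A ∂P ≠ ⊤ := by
    refine ne_of_lt (lt_of_le_of_lt ?_ ENNReal.one_lt_top)
    calc ∫⁻ ω in B, κ (X n ω) A ∂P ≤ ∫⁻ _ in B, 1 ∂P :=
          lintegral_mono fun ω => prob_le_one
    _ = P B := by rw [setLIntegral_one]
    _ ≤ 1 := prob_le_one
  exact (ENNReal.toReal_eq_toReal_iff' hfin1 (measure_ne_top P _)).1 (by rw [← h3, h1, h2])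


lemma markov_step_map (hX : IsMarkovChainWith P κ X) (n : ℕ) {B : Set Ω}
    (hB : MeasurableSet[chainFiltration X n] B) :
    (P.restrict B).map (X (n+1)) = ((P.restrict B).map (X n)).bind (fun x => κ x) := by
  ext A hA
  rw [Measure.map_apply (hX.1 (n+1)) hA, Measure.bind_apply hA κ.measurable.aemeasurable,
    lintegral_map (κ.measurable_coe hA) (hX.1 n),
    Measure.restrict_apply (hX.1 (n+1) hA), markov_step_set hX n hB hA]

lemma markov_iter_map (hX : IsMarkovChainWith P κ X) (j : ℕ) {B : Set Ω}
    (hB : MeasurableSet[chainFiltration X j] B) (t : ℕ) :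
    (P.restrict B).map (X (j+t)) = ((P.restrict B).map (X j)).bind
      (fun x => kernelIter κ t x) := by
  induction t with
  | zero =>
    have h0 : (fun x : E => kernelIter κ 0 x) = fun x => Measure.dirac x := by
      funext x; rw [show kernelIter κ 0 = Kernel.id from rfl, Kernel.id_apply]
    rw [Nat.add_zero, h0, Measure.bind_dirac]
  | succ t ih =>
    have hB' : MeasurableSet[chainFiltration X (j+t)] B :=
      chainFiltration_mono X (Nat.le_add_right j t) _ hB
    have hjt : j + (t+1) = (j+t) + 1 := rfl
    rw [hjt, markov_step_map hX (j+t) hB', ih,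
      Measure.bind_bind (kernelIter κ t).measurable.aemeasurable κ.measurable.aemeasurable]
    congr 1
    funext x
    rw [← Kernel.comp_apply, ← kernelIter_succ_left]

lemma markov_pair_law (hX : IsMarkovChainWith P κ X) (j t : ℕ) :
    P.map (fun ω => (X j ω, X (j+t) ω)) = (P.map (X j)) ⊗ₘ (kernelIter κ t) := by
  have hpair : Measurable fun ω => (X j ω, X (j+t) ω) := (hX.1 j).prodMk (hX.1 (j+t))
  haveI : IsProbabilityMeasure (P.map (X j)) := Measure.isProbabilityMeasure_map (hX.1 j).aemeasurable
  haveI : IsProbabilityMeasure (P.map fun ω => (X j ω, X (j+t) ω)) :=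
    Measure.isProbabilityMeasure_map hpair.aemeasurable
  refine ext_of_generate_finite _ generateFrom_prod.symm isPiSystem_prod ?_ ?_
  · rintro s ⟨A, hA, B, hB, rfl⟩
    simp only [Set.mem_setOf_eq] at hA hB
    have hpre : (fun ω => (X j ω, X (j+t) ω)) ⁻¹' (A ×ˢ B) = X (j+t) ⁻¹' B ∩ X j ⁻¹' A := by
      ext ω; simp [Set.mem_prod, and_comm]
    have hmain := markov_iter_map hX j (measurableSet_chainFiltration X j hA) t
    have hL : ((P.restrict (X j ⁻¹' A)).map (X (j+t))) B = P (X (j+t) ⁻¹' B ∩ X j ⁻¹' A) := by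
      rw [Measure.map_apply (hX.1 (j+t)) hB, Measure.restrict_apply (hX.1 (j+t) hB)]
    have hR : (((P.restrict (X j ⁻¹' A)).map (X j)).bind (fun x => kernelIter κ t x)) B
        = ∫⁻ ω in X j ⁻¹' A, kernelIter κ t (X j ω) B ∂P := by
      rw [Measure.bind_apply hB (kernelIter κ t).measurable.aemeasurable,
        lintegral_map ((kernelIter κ t).measurable_coe hB) (hX.1 j)]
    rw [Measure.map_apply hpair (hA.prod hB), hpre,
      Measure.compProd_apply_prod hA hB,
      setLIntegral_map hA ((kernelIter κ t).measurable_coe hB) (hX.1 j),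
      ← hR, ← hmain, hL]
  · rw [Measure.map_apply hpair MeasurableSet.univ]
    simp

lemma map_snd_compProd (ν : Measure E) [SFinite ν] (η : Kernel E E) [IsSFiniteKernel η] :
    (ν ⊗ₘ η).map Prod.snd = ν.bind (fun x => η x) := by
  ext s hs
  rw [Measure.map_apply measurable_snd hs, Measure.compProd_apply (measurable_snd hs),
    Measure.bind_apply hs η.measurable.aemeasurable]
  rfl

lemma markov_conc (hX : IsMarkovChainWith P κ X) (j t : ℕ) {C : Set E} (hC : MeasurableSet C)
    (hmem : ∀ i ω, X i ω ∈ C) :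
    ∀ᵐ ω ∂P, kernelIter κ t (X j ω) Cᶜ = 0 := by
  have hmap := markov_iter_map hX j (MeasurableSet.univ (α := Ω)) t
  rw [Measure.restrict_univ] at hmap
  have h0 : P.map (X (j+t)) Cᶜ = 0 := by
    rw [Measure.map_apply (hX.1 (j+t)) hC.compl]
    have he : X (j+t) ⁻¹' Cᶜ = ∅ := by ext ω; simp [hmem]
    rw [he, measure_empty]
  rw [hmap, Measure.bind_apply hC.compl (kernelIter κ t).measurable.aemeasurable] at h0
  have h1 : ∀ᵐ x ∂(P.map (X j)), kernelIter κ t x Cᶜ = 0 := by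
    have := (lintegral_eq_zero_iff ((kernelIter κ t).measurable_coe hC.compl)).1 h0
    filter_upwards [this] with x hx using hx
  have hms : MeasurableSet {x : E | kernelIter κ t x Cᶜ = 0} :=
    ((kernelIter κ t).measurable_coe hC.compl) (measurableSet_singleton 0)
  exact (ae_map_iff (hX.1 j).aemeasurable hms).1 h1

lemma stationary_iter {ν : Measure E} (hνκ : ν.bind (fun x => κ x) = ν) (t : ℕ) :
    ν.bind (fun x => kernelIter κ t x) = ν := by
  induction t with
  | zero =>
    have h0 : (fun x : E => kernelIter κ 0 x) = fun x => Measure.dirac x := by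
      funext x; rw [show kernelIter κ 0 = Kernel.id from rfl, Kernel.id_apply]
    rw [h0, Measure.bind_dirac]
  | succ t ih =>
    have h1 : (fun x : E => kernelIter κ (t+1) x)
        = fun x => (κ x).bind (fun y => kernelIter κ t y) := by
      funext x; rw [kernelIter_succ, Kernel.comp_apply]
    rw [h1, ← Measure.bind_bind κ.measurable.aemeasurable (kernelIter κ t).measurable.aemeasurable, hνκ, ih]

lemma stationary_conc {ν : Measure E} (hνκ : ν.bind (fun x => κ x) = ν) {C : Set E}
    (hC : MeasurableSet C) (h0 : ν Cᶜ = 0) (t : ℕ) :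
    ∀ᵐ y ∂ν, kernelIter κ t y Cᶜ = 0 := by
  have h1 : ν.bind (fun x => kernelIter κ t x) Cᶜ = 0 := by rw [stationary_iter hνκ]; exact h0
  rw [Measure.bind_apply hC.compl (kernelIter κ t).measurable.aemeasurable] at h1
  have := (lintegral_eq_zero_iff ((kernelIter κ t).measurable_coe hC.compl)).1 h1
  filter_upwards [this] with x hx using hx

lemma markov_cov_eq (hX : IsMarkovChainWith P κ X) (j t : ℕ) {g h : E → ℂ}
    (hg : Measurable g) (hh : Measurable h) (cg ch : ℝ) (hgb : ∀ x, ‖g x‖ ≤ cg)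
    (hhb : ∀ x, ‖h x‖ ≤ ch) :
    ∫ ω, g (X j ω) * h (X (j+t) ω) ∂P
      = ∫ ω, g (X j ω) * ∫ z, h z ∂(kernelIter κ t (X j ω)) ∂P := by
  have hpair : Measurable fun ω => (X j ω, X (j+t) ω) := (hX.1 j).prodMk (hX.1 (j+t))
  have hfm : Measurable fun p : E × E => g p.1 * h p.2 :=
    (hg.comp measurable_fst).mul (hh.comp measurable_snd)
  haveI : IsProbabilityMeasure (P.map (X j)) := Measure.isProbabilityMeasure_map (hX.1 j).aemeasurable
  have h1 : ∫ ω, g (X j ω) * h (X (j+t) ω) ∂P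
      = ∫ p : E × E, g p.1 * h p.2 ∂(P.map (fun ω => (X j ω, X (j+t) ω))) := by
    rw [integral_map hpair.aemeasurable hfm.aestronglyMeasurable]
  have hint : Integrable (fun p : E × E => g p.1 * h p.2)
      ((P.map (X j)) ⊗ₘ (kernelIter κ t)) := by
    refine ⟨hfm.aestronglyMeasurable, HasFiniteIntegral.of_bounded (C := cg * ch) ?_⟩
    refine ae_of_all _ fun p => ?_
    calc ‖g p.1 * h p.2‖ = ‖g p.1‖ * ‖h p.2‖ := norm_mul _ _
    _ ≤ cg * ch := mul_le_mul (hgb _) (hhb _) (norm_nonneg _) (le_trans (norm_nonneg (g p.1)) (hgb p.1))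
  have hsm : StronglyMeasurable fun x : E => ∫ z, h z ∂(kernelIter κ t x) := by
    have := ((hh.stronglyMeasurable.comp_measurable measurable_snd :
      StronglyMeasurable fun p : E × E => h p.2)).integral_kernel_prod_right'
      (κ := kernelIter κ t)
    simpa using this
  rw [h1, markov_pair_law hX j t, Measure.integral_compProd hint]
  simp_rw [integral_const_mul]
  have hmm : Measurable fun x : E => g x * ∫ z, h z ∂(kernelIter κ t x) :=
    hg.mul hsm.measurable
  rw [integral_map (hX.1 j).aemeasurable hmm.aestronglyMeasurable]


lemma restrict_eq_self_of_one {α : Type*} [MeasurableSpace α] (ν : Measure α)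
    [IsProbabilityMeasure ν] {s : Set α} (hs : ν s = 1) : ν.restrict s = ν := by
  ext A hA
  rw [Measure.restrict_apply hA]
  refine le_antisymm (measure_mono Set.inter_subset_left) ?_
  have h1 : ν s ≤ ν (A ∩ s) + ν (Aᶜ ∩ s) := by
    calc ν s = ν ((A ∩ s) ∪ (Aᶜ ∩ s)) := by
          rw [← Set.union_inter_distrib_right, Set.union_compl_self, Set.univ_inter]
    _ ≤ ν (A ∩ s) + ν (Aᶜ ∩ s) := measure_union_le _ _
  have h2 : ν (Aᶜ ∩ s) ≤ 1 - ν A := by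
    rw [← prob_compl_eq_one_sub hA]; exact measure_mono Set.inter_subset_left
  have h3 : (1:ℝ≥0∞) ≤ ν (A ∩ s) + (1 - ν A) := by
    calc (1:ℝ≥0∞) = ν s := hs.symm
    _ ≤ ν (A ∩ s) + ν (Aᶜ ∩ s) := h1
    _ ≤ ν (A ∩ s) + (1 - ν A) := add_le_add le_rfl h2
  have h4 : 1 - (1 - ν A) ≤ ν (A ∩ s) := tsub_le_iff_right.2 h3
  rwa [ENNReal.sub_sub_cancel ENNReal.one_ne_top prob_le_one] at h4

lemma ae_of_forall_mem_of_one {α : Type*} [MeasurableSpace α] (ν : Measure α)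
    [IsProbabilityMeasure ν] {s : Set α} (hs : ν s = 1) {p : α → Prop}
    (hp : MeasurableSet {x | p x}) (h : ∀ x ∈ s, p x) : ∀ᵐ x ∂ν, p x := by
  rw [ae_iff]
  have he : {x | p x}ᶜ ∩ s = ∅ := by
    ext x
    simp only [Set.mem_inter_iff, Set.mem_compl_iff, Set.mem_setOf_eq,
      Set.mem_empty_iff_false, iff_false, not_and]
    exact fun hnp hxs => hnp (h x hxs)
  show ν {x | p x}ᶜ = 0
  rw [← restrict_eq_self_of_one ν hs, Measure.restrict_apply hp.compl, he, measure_empty]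

lemma coord_le_norm {d : ℕ} (v : EuclideanSpace ℝ (Fin d)) (i : Fin d) : |v i| ≤ ‖v‖ := by
  rw [EuclideanSpace.norm_eq, ← Real.sqrt_sq_eq_abs]
  apply Real.sqrt_le_sqrt
  have := Finset.single_le_sum (f := fun j => ‖v j‖^2) (fun j _ => sq_nonneg _)
    (Finset.mem_univ i)
  simpa [Real.norm_eq_abs, sq_abs] using this

lemma fourierChar_eq {d : ℕ} (k : Fin d → ℤ) (x : EuclideanSpace ℝ (Fin d)) :
    fourierChar k x = Complex.exp (((2 * Real.pi * ∑ i, (k i : ℝ) * x i : ℝ)) * Complex.I) := by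
  rw [fourierChar]
  congr 1
  push_cast
  ring

lemma fourierChar_abs {d : ℕ} (k : Fin d → ℤ) (x : EuclideanSpace ℝ (Fin d)) :
    ‖fourierChar k x‖ = 1 := by
  rw [fourierChar_eq, Complex.norm_exp_ofReal_mul_I]

lemma norm_exp_mul_I_sub_one_le (r : ℝ) :
    ‖Complex.exp ((r:ℂ) * Complex.I) - 1‖ ≤ min 2 (2 * |r|) := by
  have habs2 : ‖Complex.exp ((r:ℂ) * Complex.I) - 1‖ ≤ 2 := by
    calc ‖Complex.exp ((r:ℂ) * Complex.I) - 1‖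
        ≤ ‖Complex.exp ((r:ℂ) * Complex.I)‖ + ‖(1:ℂ)‖ := norm_sub_le _ _
    _ = 2 := by
        rw [Complex.norm_exp_ofReal_mul_I, norm_one]; norm_num
  rcases le_or_gt (|r|) 1 with h | h
  · have habs : ‖(r:ℂ) * Complex.I‖ = |r| := by
      rw [norm_mul, Complex.norm_I, mul_one, Complex.norm_real, Real.norm_eq_abs]
    have h2 := Complex.norm_exp_sub_one_le (x := (r:ℂ) * Complex.I) (by rw [habs]; exact h)
    rw [habs] at h2
    exact le_min habs2 h2
  · exact le_min habs2 (habs2.trans (by linarith))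

lemma fourierChar_diff_le {d : ℕ} (k : Fin d → ℤ) {K : ℝ} (hK : ∀ i, |(k i : ℝ)| ≤ K)
    (a b : EuclideanSpace ℝ (Fin d)) :
    ‖fourierChar k a - fourierChar k b‖
      ≤ min 2 (4 * Real.pi * d * K * ‖a - b‖) := by
  set Sa := ∑ i, (k i : ℝ) * a i with hSa
  set Sb := ∑ i, (k i : ℝ) * b i with hSb
  have key : fourierChar k a - fourierChar k b
      = Complex.exp (((2*Real.pi*Sb : ℝ)) * Complex.I)
        * (Complex.exp (((2*Real.pi*(Sa - Sb) : ℝ)) * Complex.I) - 1) := by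
    rw [fourierChar_eq, fourierChar_eq, mul_sub, ← Complex.exp_add, mul_one]
    congr 2
    rw [hSa, hSb]
    push_cast
    ring
  rw [key, norm_mul, Complex.norm_exp_ofReal_mul_I, one_mul]
  refine le_trans (norm_exp_mul_I_sub_one_le _) (min_le_min le_rfl ?_)
  have h1 : |Sa - Sb| ≤ d * K * ‖a - b‖ := by
    have hd : Sa - Sb = ∑ i, (k i : ℝ) * ((a - b) i) := by
      rw [hSa, hSb, ← Finset.sum_sub_distrib]
      refine Finset.sum_congr rfl fun i _ => ?_
      have : (a - b) i = a i - b i := rfl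
      rw [this]; ring
    rw [hd]
    calc |∑ i, (k i:ℝ) * (a-b) i| ≤ ∑ i, |(k i:ℝ) * (a-b) i| :=
          Finset.abs_sum_le_sum_abs _ _
    _ ≤ ∑ _i : Fin d, K * ‖a - b‖ := by
        refine Finset.sum_le_sum fun i _ => ?_
        rw [abs_mul]
        exact mul_le_mul (hK i) (coord_le_norm _ i) (abs_nonneg _)
          (le_trans (abs_nonneg _) (hK i))
    _ = d * K * ‖a-b‖ := by
        rw [Finset.sum_const, Finset.card_univ, Fintype.card_fin, nsmul_eq_mul]; ring
  calc 2 * |2*Real.pi*(Sa - Sb)| = 4 * Real.pi * |Sa - Sb| := by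
        rw [abs_mul, abs_of_nonneg (by positivity : (0:ℝ) ≤ 2*Real.pi)]; ring
  _ ≤ 4*Real.pi*(d*K*‖a-b‖) :=
      mul_le_mul_of_nonneg_left h1 (by positivity)
  _ = 4*Real.pi*d*K*‖a-b‖ := by ring

lemma min_le_two_mul_rpow {x α : ℝ} (hx : 0 ≤ x) (hα0 : 0 < α) (hα1 : α ≤ 1) :
    min 2 x ≤ 2 * x ^ α := by
  rcases eq_or_lt_of_le hx with h0 | h0
  · rw [← h0, Real.zero_rpow (ne_of_gt hα0)]
    simp
  rcases le_or_gt x 2 with h | h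
  · have hxa : x = x ^ α * x ^ (1 - α) := by
      rw [← Real.rpow_add h0, add_sub_cancel, Real.rpow_one]
    have h2 : x ^ (1-α) ≤ 2 := by
      calc x ^ (1-α) ≤ 2 ^ (1-α) := Real.rpow_le_rpow hx h (by linarith)
      _ ≤ 2 ^ (1:ℝ) := Real.rpow_le_rpow_of_exponent_le one_le_two (by linarith)
      _ = 2 := Real.rpow_one 2
    calc min 2 x ≤ x := min_le_right _ _
    _ = x ^ α * x ^ (1-α) := hxa
    _ ≤ x ^ α * 2 := by
        exact mul_le_mul_of_nonneg_left h2 (Real.rpow_nonneg hx α)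
    _ = 2 * x ^ α := by ring
  · have h2 : (1:ℝ) ≤ x ^ α := by
      calc (1:ℝ) = 1 ^ α := (Real.one_rpow α).symm
      _ ≤ x ^ α := Real.rpow_le_rpow zero_le_one (by linarith) (le_of_lt hα0)
    calc min 2 x ≤ 2 := min_le_left _ _
    _ ≤ 2 * x ^ α := by linarith

lemma geom_sum_le_inv {ρ : ℝ} (h0 : 0 ≤ ρ) (h1 : ρ < 1) (s : Finset ℕ) :
    ∑ t ∈ s, ρ ^ t ≤ (1 - ρ)⁻¹ := by
  have hsum := Summable.sum_le_tsum s (fun t _ => pow_nonneg h0 t) (summable_geometric_of_lt_one h0 h1)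
  rwa [tsum_geometric_of_lt_one h0 h1] at hsum

lemma sum_pow_dist_le {ρ : ℝ} (h0 : 0 ≤ ρ) (h1 : ρ < 1) (n j : ℕ) :
    ∑ l ∈ Finset.Icc 1 n, ρ ^ ((j - l) + (l - j)) ≤ 2 * (1 - ρ)⁻¹ := by
  classical
  rw [← Finset.sum_filter_add_sum_filter_not (Finset.Icc 1 n) (fun l => l ≤ j)]
  have hA : ∑ l ∈ (Finset.Icc 1 n).filter (fun l => l ≤ j), ρ ^ ((j - l) + (l - j))
      ≤ (1-ρ)⁻¹ := by
    have heq : ∀ l ∈ (Finset.Icc 1 n).filter (fun l => l ≤ j),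
        ρ ^ ((j-l)+(l-j)) = (fun t => ρ ^ t) (j - l) := by
      intro l hl; simp only [Finset.mem_filter] at hl
      rw [Nat.sub_eq_zero_of_le hl.2, Nat.add_zero]
    have hinj : ∀ x ∈ (Finset.Icc 1 n).filter (fun l => l ≤ j),
        ∀ y ∈ (Finset.Icc 1 n).filter (fun l => l ≤ j), j - x = j - y → x = y := by
      intro x hx y hy hxy
      simp only [Finset.mem_filter, Finset.mem_Icc] at hx hy
      omega
    rw [Finset.sum_congr rfl heq, ← Finset.sum_image hinj]
    exact geom_sum_le_inv h0 h1 _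
  have hB : ∑ l ∈ (Finset.Icc 1 n).filter (fun l => ¬ l ≤ j), ρ ^ ((j - l) + (l - j))
      ≤ (1-ρ)⁻¹ := by
    have heq : ∀ l ∈ (Finset.Icc 1 n).filter (fun l => ¬ l ≤ j),
        ρ ^ ((j-l)+(l-j)) = (fun t => ρ ^ t) (l - j) := by
      intro l hl; simp only [Finset.mem_filter] at hl
      rw [Nat.sub_eq_zero_of_le (le_of_not_ge hl.2), Nat.zero_add]
    have hinj : ∀ x ∈ (Finset.Icc 1 n).filter (fun l => ¬ l ≤ j),
        ∀ y ∈ (Finset.Icc 1 n).filter (fun l => ¬ l ≤ j), x - j = y - j → x = y := by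
      intro x hx y hy hxy
      simp only [Finset.mem_filter, Finset.mem_Icc] at hx hy
      omega
    rw [Finset.sum_congr rfl heq, ← Finset.sum_image hinj]
    exact geom_sum_le_inv h0 h1 _
  linarith

end Aux


section Decay

variable {d : ℕ}

lemma fourierChar_measurable (k : Fin d → ℤ) : Measurable (fourierChar k) := by
  have h : fourierChar k = fun x => Complex.exp
      (((2 * Real.pi * ∑ i, (k i : ℝ) * x i : ℝ)) * Complex.I) := funext (fourierChar_eq k)
  rw [h]
  refine Complex.measurable_exp.comp (Measurable.mul_const ?_ _)
  refine Complex.measurable_ofReal.comp (Measurable.const_mul ?_ _)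
  exact Finset.measurable_sum _ fun i _ => ((measurable_pi_apply i).comp (WithLp.measurable_ofLp _ _)).const_mul _

lemma fourierChar_integrable (k : Fin d → ℤ) (ν : Measure (EuclideanSpace ℝ (Fin d)))
    [IsProbabilityMeasure ν] : Integrable (fourierChar k) ν := by
  refine ⟨(fourierChar_measurable k).aestronglyMeasurable,
    HasFiniteIntegral.of_bounded (C := 1) (ae_of_all _ fun z => ?_)⟩
  rw [fourierChar_abs]

lemma fourierChar_integral_abs_le (k : Fin d → ℤ) (ν : Measure (EuclideanSpace ℝ (Fin d)))
    [IsProbabilityMeasure ν] : ‖∫ z, fourierChar k z ∂ν‖ ≤ 1 := by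
  calc ‖∫ z, fourierChar k z ∂ν‖ ≤ ∫ z, ‖fourierChar k z‖ ∂ν := norm_integral_le_integral_norm _
  _ = ∫ _z, (1:ℝ) ∂ν := by
      refine integral_congr_ae (ae_of_all _ fun z => ?_)
      simp only [fourierChar_abs]
  _ = 1 := by simp

lemma coupling_decay {Ωs : Set (EuclideanSpace ℝ (Fin d))} (hb : Bornology.IsBounded Ωs)
    {R : ℝ} (hdiam : Metric.diam Ωs = R)
    {κ : Kernel (EuclideanSpace ℝ (Fin d)) (EuclideanSpace ℝ (Fin d))} [IsMarkovKernel κ]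
    {D θ : ℝ} (hD : 1 ≤ D) (hθ0 : 0 < θ)
    (hcon : ExpContracting Ωs κ D θ) (k : Fin d → ℤ) {K : ℝ} (hK : ∀ i, |(k i:ℝ)| ≤ K)
    (hK0 : 0 ≤ K) {x y : EuclideanSpace ℝ (Fin d)} (hx : x ∈ Ωs) (hy : y ∈ Ωs) (t : ℕ)
    (hcx : (kernelIter κ t x) (closure Ωs)ᶜ = 0)
    (hcy : (kernelIter κ t y) (closure Ωs)ᶜ = 0) :
    ‖∫ z, fourierChar k z ∂(kernelIter κ t x)
        - ∫ z, fourierChar k z ∂(kernelIter κ t y)‖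
      ≤ min 2 (4 * Real.pi * d * K * (D * θ ^ t * R)) := by
  obtain ⟨π, ⟨hfst, hsnd⟩, hπb⟩ := hcon x hx y hy t
  have hR0 : 0 ≤ R := hdiam ▸ Metric.diam_nonneg
  have hL0 : 0 ≤ 4 * Real.pi * d * K := by positivity
  haveI : IsProbabilityMeasure π := by
    constructor
    have h1 : π.map Prod.fst Set.univ = 1 := by rw [hfst]; exact measure_univ
    rwa [Measure.map_apply measurable_fst MeasurableSet.univ, Set.preimage_univ] at h1
  have hCc : MeasurableSet (closure Ωs)ᶜ := isClosed_closure.measurableSet.compl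
  have hdc : Metric.diam (closure Ωs) = R := by
    rw [← hdiam, Metric.diam, Metric.diam, EMetric.diam_closure]
  have h1 : ∀ᵐ p : _ × _ ∂π, p.1 ∈ closure Ωs := by
    rw [ae_iff]
    show π (Prod.fst ⁻¹' (closure Ωs)ᶜ) = 0
    rw [← Measure.map_apply measurable_fst hCc, hfst]; exact hcx
  have h2 : ∀ᵐ p : _ × _ ∂π, p.2 ∈ closure Ωs := by
    rw [ae_iff]
    show π (Prod.snd ⁻¹' (closure Ωs)ᶜ) = 0
    rw [← Measure.map_apply measurable_snd hCc, hsnd]; exact hcy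
  have hnd : ∀ᵐ p : _ × _ ∂π, ‖p.1 - p.2‖ ≤ R := by
    filter_upwards [h1, h2] with p hp1 hp2
    rw [← dist_eq_norm]
    exact hdc ▸ Metric.dist_le_diam_of_mem hb.closure hp1 hp2
  have hnm : Measurable fun p : EuclideanSpace ℝ (Fin d) × EuclideanSpace ℝ (Fin d) =>
      ‖p.1 - p.2‖ := ((continuous_fst.sub continuous_snd).norm).measurable
  have hint_norm : Integrable (fun p : _ × _ => ‖p.1 - p.2‖) π := by
    refine ⟨hnm.aestronglyMeasurable, HasFiniteIntegral.of_bounded (C := R) ?_⟩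
    filter_upwards [hnd] with p hp
    rwa [Real.norm_eq_abs, abs_of_nonneg (norm_nonneg _)]
  have hfm := fourierChar_measurable k
  have hint1 : Integrable (fun p : _ × _ => fourierChar k p.1) π := by
    refine ⟨(hfm.comp measurable_fst).aestronglyMeasurable,
      HasFiniteIntegral.of_bounded (C := 1) (ae_of_all _ fun p => ?_)⟩
    rw [fourierChar_abs]
  have hint2 : Integrable (fun p : _ × _ => fourierChar k p.2) π := by
    refine ⟨(hfm.comp measurable_snd).aestronglyMeasurable,
      HasFiniteIntegral.of_bounded (C := 1) (ae_of_all _ fun p => ?_)⟩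
    rw [fourierChar_abs]
  have hmap1 : ∫ z, fourierChar k z ∂(kernelIter κ t x) = ∫ p : _ × _, fourierChar k p.1 ∂π := by
    rw [← hfst, integral_map measurable_fst.aemeasurable hfm.aestronglyMeasurable]
  have hmap2 : ∫ z, fourierChar k z ∂(kernelIter κ t y) = ∫ p : _ × _, fourierChar k p.2 ∂π := by
    rw [← hsnd, integral_map measurable_snd.aemeasurable hfm.aestronglyMeasurable]
  rw [hmap1, hmap2, ← integral_sub hint1 hint2]
  have hminm : Measurable fun p : EuclideanSpace ℝ (Fin d) × EuclideanSpace ℝ (Fin d) =>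
      min 2 (4 * Real.pi * d * K * ‖p.1 - p.2‖) := measurable_const.min (hnm.const_mul _)
  have hmin_int : Integrable (fun p : _ × _ => min 2 (4 * Real.pi * d * K * ‖p.1 - p.2‖)) π := by
    refine ⟨hminm.aestronglyMeasurable, HasFiniteIntegral.of_bounded (C := 2) (ae_of_all _ fun p => ?_)⟩
    rw [Real.norm_eq_abs, abs_of_nonneg (le_min zero_le_two (by positivity))]
    exact min_le_left _ _
  calc ‖∫ p : _ × _, (fourierChar k p.1 - fourierChar k p.2) ∂π‖
      ≤ ∫ p : _ × _, ‖fourierChar k p.1 - fourierChar k p.2‖ ∂π := norm_integral_le_integral_norm _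
  _ ≤ ∫ p : _ × _, min 2 (4 * Real.pi * d * K * ‖p.1 - p.2‖) ∂π := by
      refine integral_mono (hint1.sub hint2).norm hmin_int fun p => ?_
      exact fourierChar_diff_le k hK _ _
  _ ≤ min 2 (4 * Real.pi * d * K * (D * θ ^ t * R)) := by
      refine le_min ?_ ?_
      · calc ∫ p : _ × _, min 2 (4 * Real.pi * d * K * ‖p.1 - p.2‖) ∂π
            ≤ ∫ _p : _ × _, (2:ℝ) ∂π := integral_mono hmin_int (integrable_const 2)
              fun p => min_le_left _ _
        _ = 2 := by simp
      · calc ∫ p : _ × _, min 2 (4 * Real.pi * d * K * ‖p.1 - p.2‖) ∂π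
            ≤ ∫ p : _ × _, 4 * Real.pi * d * K * ‖p.1 - p.2‖ ∂π :=
            integral_mono hmin_int (hint_norm.const_mul _) fun p => min_le_right _ _
        _ = 4 * Real.pi * d * K * ∫ p : _ × _, ‖p.1 - p.2‖ ∂π := integral_const_mul _ _
        _ ≤ 4 * Real.pi * d * K * (D * θ ^ t * ‖x - y‖) :=
            mul_le_mul_of_nonneg_left hπb hL0
        _ ≤ 4 * Real.pi * d * K * (D * θ ^ t * R) := by
            refine mul_le_mul_of_nonneg_left ?_ hL0
            refine mul_le_mul_of_nonneg_left ?_ (by positivity)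
            rw [← dist_eq_norm]
            exact hdiam ▸ Metric.dist_le_diam_of_mem hb hx hy

end Decay

lemma rpow_le_one_add {x α : ℝ} (hx : 0 ≤ x) (hα0 : 0 < α) (hα1 : α ≤ 1) :
    x ^ α ≤ 1 + x := by
  rcases le_or_gt x 1 with h | h
  · calc x ^ α ≤ 1 := Real.rpow_le_one hx h hα0.le
    _ ≤ 1 + x := by linarith
  · calc x ^ α ≤ x ^ (1:ℝ) := Real.rpow_le_rpow_of_exponent_le h.le hα1
    _ = x := Real.rpow_one x
    _ ≤ 1 + x := by linarith

/-- variance bound for characters along the chain. There is a constant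
`C` depending only on `d`, `D` and the diameter of `Ω` such that: for any exponentially
contracting Markov chain on a bounded `Ω ⊆ ℝ^d` with stationary measure `μ`, any
`α ∈ (0,1]`, any `k ∈ ℤ^d` and any `n ≥ 1/(1 − θ^α)`,
`E[|μ̂_n(e_k) − μ(e_k)|²] ≤ C |k|_∞^{2α}/((1 − θ^α) n)`. -/
theorem markov_fourier_variance
    (d : ℕ) (D R : ℝ) (hD : 1 ≤ D) (hR : 0 ≤ R) :
    ∃ C : ℝ, 0 < C ∧
      ∀ (Ωs : Set (EuclideanSpace ℝ (Fin d))),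
        Bornology.IsBounded Ωs → Metric.diam Ωs = R →
      ∀ θ : ℝ, θ ∈ Set.Ioo (0:ℝ) 1 →
      ∀ (κ : Kernel (EuclideanSpace ℝ (Fin d)) (EuclideanSpace ℝ (Fin d))),
        IsMarkovKernel κ → ExpContracting Ωs κ D θ →
      ∀ (μ : Measure (EuclideanSpace ℝ (Fin d))), IsProbabilityMeasure μ →
        μ.bind κ = μ → μ Ωs = 1 →
      ∀ (Ω : Type) [MeasurableSpace Ω] (P : Measure Ω), IsProbabilityMeasure P →
      ∀ (X : ℕ → Ω → EuclideanSpace ℝ (Fin d)), IsMarkovChainWith P κ X →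
        (∀ j ω, X j ω ∈ Ωs) →
      ∀ α : ℝ, α ∈ Set.Ioc (0:ℝ) 1 →
      ∀ k : Fin d → ℤ,
      ∀ n : ℕ, 1 / (1 - θ ^ α) ≤ (n : ℝ) →
        ∫ ω, ‖(∫ x, fourierChar k x ∂(empMeasure X n ω))
              - ∫ x, fourierChar k x ∂μ‖ ^ 2 ∂P
          ≤ C * (⨆ i, (|k i| : ℝ)) ^ (2 * α) / ((1 - θ ^ α) * n) := by
  refine ⟨8 * (1 + 4 * Real.pi * d) * D * (1 + R), by positivity, ?_⟩
  intro Ωs hb hdiam θ hθ κ hmk hcon μ hμ hstat hμΩ Ω mΩ P hP X hX hmem α hα k n hn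
  haveI := hmk; haveI := hμ; haveI := hP
  have hθ0 : 0 < θ := hθ.1
  have hθ1 : θ < 1 := hθ.2
  have hα0 : 0 < α := hα.1
  have hα1 : α ≤ 1 := hα.2
  set ρ : ℝ := θ ^ α with hρdef
  have hρ0 : 0 ≤ ρ := Real.rpow_nonneg hθ0.le α
  have hρ1 : ρ < 1 := Real.rpow_lt_one hθ0.le hθ1 hα0
  have h1ρ : 0 < 1 - ρ := by linarith
  have hn1 : (1:ℝ) ≤ (n:ℝ) := by
    refine le_trans ?_ hn
    rw [le_div_iff₀ h1ρ]
    linarith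
  have hnne : n ≠ 0 := by
    intro h; rw [h] at hn1; norm_num at hn1
  have hnpos : (0:ℝ) < n := lt_of_lt_of_le one_pos hn1
  have hfm := fourierChar_measurable k
  set μf : ℂ := ∫ z, fourierChar k z ∂μ with hμfdef
  have hμfabs : ‖μf‖ ≤ 1 := fourierChar_integral_abs_le k μ
  have hemp : ∀ ω, ∫ z, fourierChar k z ∂(empMeasure X n ω)
      = (((n:ℝ)⁻¹ : ℝ) : ℂ) * ∑ j ∈ Finset.Icc 1 n, fourierChar k (X j ω) := by
    intro ω
    rw [empMeasure, integral_smul_measure, integral_finset_sum_measure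
      (fun j _ => ⟨hfm.aestronglyMeasurable, HasFiniteIntegral.of_bounded (C := 1)
        (ae_of_all _ fun z => by rw [fourierChar_abs])⟩)]
    have hc : ((n : ℝ≥0∞)⁻¹).toReal = (n:ℝ)⁻¹ := by
      simp
    rw [hc, Finset.sum_congr rfl fun j _ => integral_dirac' (fourierChar k) (X j ω)
      hfm.stronglyMeasurable, Complex.real_smul]
  have hK0 : (0:ℝ) ≤ ⨆ i, (|k i| : ℝ) := Real.iSup_nonneg fun i => by positivity
  have hRHS0 : (0:ℝ) ≤ 8 * (1 + 4 * Real.pi * d) * D * (1 + R)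
      * (⨆ i, (|k i| : ℝ)) ^ (2 * α) / ((1 - ρ) * n) := by
    apply div_nonneg
    · exact mul_nonneg (by positivity) (Real.rpow_nonneg hK0 _)
    · exact mul_nonneg h1ρ.le hnpos.le
  by_cases hk0 : ∀ i, k i = 0
  · have hone : ∀ z, fourierChar k z = 1 := by
      intro z
      rw [fourierChar_eq]
      simp [hk0]
    have hint0 : ∀ ω : Ω, (∫ z, fourierChar k z ∂(empMeasure X n ω)) - μf = 0 := by
      intro ω
      rw [hemp ω, hμfdef]
      simp only [hone]
      rw [integral_const, Finset.sum_const, Nat.card_Icc, Nat.add_sub_cancel]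
      simp only [probReal_univ, measure_univ, ENNReal.toReal_one, one_smul, nsmul_eq_mul, mul_one]
      rw [Complex.ofReal_inv, Complex.ofReal_natCast,
        inv_mul_cancel₀ (by exact_mod_cast hnne : ((n:ℂ) ≠ 0))]
      ring
    calc ∫ ω, ‖(∫ x, fourierChar k x ∂(empMeasure X n ω)) - μf‖ ^ 2 ∂P
        = ∫ _ω, (0:ℝ) ∂P := by
          refine integral_congr_ae (ae_of_all _ fun ω => ?_)
          show ‖(∫ x, fourierChar k x ∂(empMeasure X n ω)) - μf‖ ^ 2 = (0:ℝ)
          rw [hint0 ω]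
          simp
    _ = 0 := integral_zero _ _
    _ ≤ _ := hRHS0
  · push_neg at hk0
    obtain ⟨i₀, hi₀⟩ := hk0
    haveI : Nonempty (Fin d) := ⟨i₀⟩
    set K : ℝ := ⨆ i, (|k i| : ℝ) with hKdef
    have hbdd : BddAbove (Set.range fun i => (|k i| : ℝ)) :=
      Set.Finite.bddAbove (Set.finite_range _)
    have hKi : ∀ i, |(k i : ℝ)| ≤ K := fun i => le_ciSup hbdd i
    have hK1 : (1:ℝ) ≤ K := by
      refine le_trans ?_ (hKi i₀)
      rw [← Int.cast_abs]
      exact_mod_cast Int.one_le_abs hi₀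
    have hKnn : (0:ℝ) ≤ K := le_trans zero_le_one hK1
    set g : EuclideanSpace ℝ (Fin d) → ℂ := fun z => fourierChar k z - μf with hgdef
    have hgm : Measurable g := hfm.sub measurable_const
    have hgb : ∀ z, ‖g z‖ ≤ 2 := by
      intro z
      calc ‖g z‖ ≤ ‖fourierChar k z‖ + ‖μf‖ := norm_sub_le _ _
      _ ≤ 1 + 1 := add_le_add (le_of_eq (by rw [fourierChar_abs]))
            (by exact hμfabs)
      _ = 2 := by norm_num
    set S : Ω → ℂ := fun ω => ∑ j ∈ Finset.Icc 1 n, g (X j ω) with hSdef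
    set L : ℝ := 4 * Real.pi * d * K with hLdef
    have hL0 : 0 ≤ L := by rw [hLdef]; positivity
    set M : ℝ := 4 * (1 + 4 * Real.pi * d) * D * (1 + R) * K ^ α with hMdef
    have hM0 : 0 ≤ M := by
      rw [hMdef]
      have := Real.rpow_nonneg hKnn α
      positivity
    have hCset : MeasurableSet (closure Ωs) := isClosed_closure.measurableSet
    have hmem' : ∀ i ω, X i ω ∈ closure Ωs := fun i ω => subset_closure (hmem i ω)
    have hμC : μ (closure Ωs)ᶜ = 0 := by
      have h1 : μ (closure Ωs) = 1 :=
        le_antisymm prob_le_one (hμΩ ▸ measure_mono subset_closure)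
      rw [measure_compl hCset (measure_ne_top μ _), measure_univ, h1, tsub_self]
    -- bound on kernel integrals of g
    have hH : ∀ t : ℕ, ∀ u ∈ Ωs, (kernelIter κ t u) (closure Ωs)ᶜ = 0 →
        ‖∫ z, g z ∂(kernelIter κ t u)‖ ≤ min 2 (L * (D * θ ^ t * R)) := by
      intro t u hu hcu
      have hFint : ∀ v : EuclideanSpace ℝ (Fin d), ∫ z, g z ∂(kernelIter κ t v)
          = (∫ z, fourierChar k z ∂(kernelIter κ t v)) - μf := by
        intro v
        rw [hgdef]
        rw [integral_sub (fourierChar_integrable k _) (integrable_const μf), integral_const]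
        simp [measure_univ]
      have hFsm : StronglyMeasurable
          fun v : EuclideanSpace ℝ (Fin d) => ∫ z, fourierChar k z ∂(kernelIter κ t v) := by
        have := (hfm.stronglyMeasurable.comp_measurable measurable_snd :
          StronglyMeasurable fun p : EuclideanSpace ℝ (Fin d) × EuclideanSpace ℝ (Fin d)
            => fourierChar k p.2).integral_kernel_prod_right' (κ := kernelIter κ t)
        simpa using this
      have hμrep : μf = ∫ v, (∫ z, fourierChar k z ∂(kernelIter κ t v)) ∂μ := by
        have h1 : μ.bind (fun x => kernelIter κ t x) = μ := stationary_iter hstat t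
        have h2 : (μ ⊗ₘ kernelIter κ t).map Prod.snd = μ := by
          rw [map_snd_compProd]; exact h1
        have hintc : Integrable (fun p : EuclideanSpace ℝ (Fin d) × EuclideanSpace ℝ (Fin d)
            => fourierChar k p.2) (μ ⊗ₘ kernelIter κ t) :=
          ⟨(hfm.comp measurable_snd).aestronglyMeasurable,
            HasFiniteIntegral.of_bounded (C := 1) (ae_of_all _ fun p => by
              rw [fourierChar_abs])⟩
        calc μf = ∫ z, fourierChar k z ∂((μ ⊗ₘ kernelIter κ t).map Prod.snd) := by
              rw [hμfdef, h2]
        _ = ∫ p : EuclideanSpace ℝ (Fin d) × EuclideanSpace ℝ (Fin d), fourierChar k p.2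
              ∂(μ ⊗ₘ kernelIter κ t) :=
            integral_map measurable_snd.aemeasurable hfm.aestronglyMeasurable
        _ = ∫ v, ∫ z, fourierChar k z ∂(kernelIter κ t v) ∂μ :=
            Measure.integral_compProd hintc
      rw [hFint u]
      have hFintb : Integrable
          (fun v : EuclideanSpace ℝ (Fin d) => ∫ z, fourierChar k z ∂(kernelIter κ t v)) μ :=
        ⟨hFsm.aestronglyMeasurable, HasFiniteIntegral.of_bounded (C := 1)
          (ae_of_all _ fun v => by
            exact fourierChar_integral_abs_le k _)⟩
      have hdiff : (∫ z, fourierChar k z ∂(kernelIter κ t u)) - μf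
          = ∫ v, ((∫ z, fourierChar k z ∂(kernelIter κ t u))
              - (∫ z, fourierChar k z ∂(kernelIter κ t v))) ∂μ := by
        rw [integral_sub (integrable_const _) hFintb, integral_const]
        simp only [probReal_univ, measure_univ, ENNReal.toReal_one, one_smul]
        rw [← hμrep]
      rw [hdiff]
      have hconcμ := stationary_conc hstat hCset hμC t
      have hforall : ∀ v ∈ Ωs, ((kernelIter κ t v) (closure Ωs)ᶜ = 0 →
          ‖(∫ z, fourierChar k z ∂(kernelIter κ t u))
            - (∫ z, fourierChar k z ∂(kernelIter κ t v))‖ ≤ min 2 (L * (D * θ ^ t * R))) := by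
        intro v hv hcv
        have := coupling_decay hb hdiam hD hθ0 hcon k hKi hKnn hu hv t hcu hcv
        rw [hLdef]
        exact this
      have hqmeas : MeasurableSet {v : EuclideanSpace ℝ (Fin d) |
          (kernelIter κ t v) (closure Ωs)ᶜ = 0 →
          ‖(∫ z, fourierChar k z ∂(kernelIter κ t u))
            - (∫ z, fourierChar k z ∂(kernelIter κ t v))‖ ≤ min 2 (L * (D * θ ^ t * R))} := by
        have hm1 : MeasurableSet {v : EuclideanSpace ℝ (Fin d) |
            (kernelIter κ t v) (closure Ωs)ᶜ = 0} :=
          ((kernelIter κ t).measurable_coe hCset.compl) (measurableSet_singleton 0)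
        have hm2 : MeasurableSet {v : EuclideanSpace ℝ (Fin d) |
            ‖(∫ z, fourierChar k z ∂(kernelIter κ t u))
              - (∫ z, fourierChar k z ∂(kernelIter κ t v))‖
              ≤ min 2 (L * (D * θ ^ t * R))} := by
          refine measurableSet_le ?_ measurable_const
          exact (measurable_const.sub hFsm.measurable).norm
        have hset : {v : EuclideanSpace ℝ (Fin d) |
            (kernelIter κ t v) (closure Ωs)ᶜ = 0 →
            ‖(∫ z, fourierChar k z ∂(kernelIter κ t u))
              - (∫ z, fourierChar k z ∂(kernelIter κ t v))‖ ≤ min 2 (L * (D * θ ^ t * R))}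
            = {v : EuclideanSpace ℝ (Fin d) | (kernelIter κ t v) (closure Ωs)ᶜ = 0}ᶜ
              ∪ {v : EuclideanSpace ℝ (Fin d) |
                ‖(∫ z, fourierChar k z ∂(kernelIter κ t u))
                  - (∫ z, fourierChar k z ∂(kernelIter κ t v))‖
                  ≤ min 2 (L * (D * θ ^ t * R))} := by
          ext v
          simp [imp_iff_not_or]
        rw [hset]
        exact hm1.compl.union hm2
      have hae1 := ae_of_forall_mem_of_one μ hμΩ hqmeas hforall
      have haeb : ∀ᵐ v ∂μ, ‖(∫ z, fourierChar k z ∂(kernelIter κ t u))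
          - (∫ z, fourierChar k z ∂(kernelIter κ t v))‖ ≤ min 2 (L * (D * θ ^ t * R)) := by
        filter_upwards [hae1, hconcμ] with v hv hcv using hv hcv
      calc ‖∫ v, ((∫ z, fourierChar k z ∂(kernelIter κ t u))
              - (∫ z, fourierChar k z ∂(kernelIter κ t v))) ∂μ‖
          ≤ min 2 (L * (D * θ ^ t * R)) * (μ Set.univ).toReal :=
            norm_integral_le_of_norm_le_const haeb
      _ = min 2 (L * (D * θ ^ t * R)) := by simp [measure_univ]
    have hXm := hX.1
    have hgconjm : Measurable fun z => (starRingEnd ℂ) (g z) :=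
      Complex.continuous_conj.measurable.comp hgm
    -- covariance bound for pairs (j, j+t)
    have hcov' : ∀ j t : ℕ,
        ‖∫ ω, (starRingEnd ℂ) (g (X j ω)) * g (X (j+t) ω) ∂P‖
          ≤ 2 * min 2 (L * (D * θ ^ t * R)) := by
      intro j t
      have hgsm : StronglyMeasurable
          fun v : EuclideanSpace ℝ (Fin d) => ∫ z, g z ∂(kernelIter κ t v) := by
        have := (hgm.stronglyMeasurable.comp_measurable measurable_snd :
          StronglyMeasurable fun p : EuclideanSpace ℝ (Fin d) × EuclideanSpace ℝ (Fin d)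
            => g p.2).integral_kernel_prod_right' (κ := kernelIter κ t)
        simpa using this
      rw [markov_cov_eq hX j t hgconjm hgm 2 2
        (fun z => by rw [RCLike.norm_conj]; exact hgb z) hgb]
      have hae := markov_conc hX j t hCset hmem'
      have hB0 : (0:ℝ) ≤ min 2 (L * (D * θ ^ t * R)) :=
        le_min zero_le_two (by positivity)
      calc ‖∫ ω, (starRingEnd ℂ) (g (X j ω)) * ∫ z, g z ∂(kernelIter κ t (X j ω)) ∂P‖
          ≤ ∫ ω, ‖(starRingEnd ℂ) (g (X j ω)) * ∫ z, g z ∂(kernelIter κ t (X j ω))‖ ∂P :=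
            norm_integral_le_integral_norm _
      _ ≤ ∫ _ω, 2 * min 2 (L * (D * θ ^ t * R)) ∂P := by
          refine integral_mono_ae ?_ (integrable_const _) ?_
          · refine ⟨((hgconjm.comp (hXm j)).mul
              (hgsm.measurable.comp (hXm j))).norm.aestronglyMeasurable,
              HasFiniteIntegral.of_bounded (C := 4) (ae_of_all _ fun ω => ?_)⟩
            rw [norm_norm, norm_mul, RCLike.norm_conj]
            have h2' : ‖∫ z, g z ∂(kernelIter κ t (X j ω))‖ ≤ 2 := by
              calc ‖∫ z, g z ∂(kernelIter κ t (X j ω))‖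
                  ≤ ∫ z, ‖g z‖ ∂(kernelIter κ t (X j ω)) := norm_integral_le_integral_norm _
              _ ≤ ∫ _z, (2:ℝ) ∂(kernelIter κ t (X j ω)) := by
                  refine integral_mono ?_ (integrable_const _) hgb
                  exact ⟨hgm.norm.aestronglyMeasurable, HasFiniteIntegral.of_bounded (C := 2)
                    (ae_of_all _ fun z => by rw [norm_norm]; exact hgb z)⟩
              _ = 2 := by simp [measure_univ]
            calc ‖g (X j ω)‖ * ‖∫ z, g z ∂(kernelIter κ t (X j ω))‖
                ≤ 2 * 2 := mul_le_mul (hgb _) h2' (norm_nonneg _) (by norm_num)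
            _ = 4 := by norm_num
          · filter_upwards [hae] with ω hω
            rw [norm_mul, RCLike.norm_conj]
            have h2' : ‖∫ z, g z ∂(kernelIter κ t (X j ω))‖ ≤ min 2 (L * (D * θ ^ t * R)) := by
              exact hH t (X j ω) (hmem j ω) hω
            exact mul_le_mul (hgb _) h2' (norm_nonneg _) (by norm_num)
      _ = 2 * min 2 (L * (D * θ ^ t * R)) := by simp [measure_univ]
    -- numeric decay bound
    have hρt : ∀ t : ℕ, 2 * min 2 (L * (D * θ ^ t * R)) ≤ M * ρ ^ t := by
      intro t
      have hθtn : (0:ℝ) ≤ θ ^ t := by positivity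
      have hx0 : 0 ≤ L * (D * θ ^ t * R) := by positivity
      have h1 := min_le_two_mul_rpow hx0 hα0 hα1
      have hrw : L * (D * θ ^ t * R) = (L * D * R) * θ ^ t := by ring
      have hLDR : (0:ℝ) ≤ L * D * R := by positivity
      have hsplit : ((L * D * R) * θ ^ t) ^ α = (L * D * R) ^ α * ρ ^ t := by
        rw [Real.mul_rpow hLDR hθtn]
        congr 1
        rw [← Real.rpow_natCast θ t, ← Real.rpow_mul hθ0.le, mul_comm (t:ℝ) α,
          Real.rpow_mul hθ0.le, Real.rpow_natCast]
      have hfactor : (L * D * R) ^ α ≤ (1 + 4 * Real.pi * d) * K ^ α * D * (1 + R) := by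
        have hLsplit : L * D * R = ((4 * Real.pi * d) * K) * D * R := by rw [hLdef]
        rw [hLsplit]
        have h4d : (0:ℝ) ≤ 4 * Real.pi * d := by positivity
        rw [Real.mul_rpow (by positivity) hR, Real.mul_rpow (by positivity) (by linarith : (0:ℝ) ≤ D),
          Real.mul_rpow h4d hKnn]
        have e1 : (4 * Real.pi * (d:ℝ)) ^ α ≤ 1 + 4 * Real.pi * d :=
          rpow_le_one_add h4d hα0 hα1
        have e2 : D ^ α ≤ D := by
          calc D ^ α ≤ D ^ (1:ℝ) := Real.rpow_le_rpow_of_exponent_le hD hα1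
          _ = D := Real.rpow_one D
        have e3 : R ^ α ≤ 1 + R := rpow_le_one_add hR hα0 hα1
        have p1 : (0:ℝ) ≤ K ^ α := Real.rpow_nonneg hKnn α
        have p2 : (0:ℝ) ≤ D ^ α := Real.rpow_nonneg (by linarith) α
        have p3 : (0:ℝ) ≤ R ^ α := Real.rpow_nonneg hR α
        calc (4 * Real.pi * (d:ℝ)) ^ α * K ^ α * D ^ α * R ^ α
            ≤ ((1 + 4 * Real.pi * d) * K ^ α) * D * (1 + R) := by
              refine mul_le_mul ?_ e3 p3 ?_
              · refine mul_le_mul ?_ e2 p2 ?_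
                · exact mul_le_mul e1 le_rfl p1 (by positivity)
                · positivity
              · have : (0:ℝ) ≤ (1 + 4 * Real.pi * d) * K ^ α := by positivity
                exact mul_nonneg this (by linarith)
        _ = (1 + 4 * Real.pi * d) * K ^ α * D * (1 + R) := by ring
      have hρtn : (0:ℝ) ≤ ρ ^ t := pow_nonneg hρ0 t
      calc 2 * min 2 (L * (D * θ ^ t * R)) ≤ 2 * (2 * (L * (D * θ ^ t * R)) ^ α) := by linarith
      _ = 4 * ((L * D * R) * θ ^ t) ^ α := by rw [hrw]; ring
      _ = 4 * ((L * D * R) ^ α * ρ ^ t) := by rw [hsplit]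
      _ ≤ 4 * ((1 + 4 * Real.pi * d) * K ^ α * D * (1 + R) * ρ ^ t) := by
          have := mul_le_mul_of_nonneg_right hfactor hρtn
          linarith
      _ = M * ρ ^ t := by rw [hMdef]; ring
    -- full covariance bound
    have hcovfull : ∀ j l : ℕ, j ∈ Finset.Icc 1 n → l ∈ Finset.Icc 1 n →
        ‖∫ ω, (starRingEnd ℂ) (g (X j ω)) * g (X l ω) ∂P‖
          ≤ M * ρ ^ ((j - l) + (l - j)) := by
      intro j l _ _
      rcases le_total j l with h | h
      · have h1 := hcov' j (l - j)
        rw [Nat.add_sub_cancel' h] at h1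
        refine h1.trans ?_
        calc 2 * min 2 (L * (D * θ ^ (l - j) * R)) ≤ M * ρ ^ (l - j) := hρt _
        _ = M * ρ ^ ((j - l) + (l - j)) := by rw [Nat.sub_eq_zero_of_le h, Nat.zero_add]
      · have hswap : ∫ ω, (starRingEnd ℂ) (g (X j ω)) * g (X l ω) ∂P
            = (starRingEnd ℂ) (∫ ω, (starRingEnd ℂ) (g (X l ω)) * g (X j ω) ∂P) := by
          rw [← integral_conj]
          refine integral_congr_ae (ae_of_all _ fun ω => ?_)
          simp only [map_mul, Complex.conj_conj]
          ring
        rw [hswap, Complex.norm_conj]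
        have h1 := hcov' l (j - l)
        rw [Nat.add_sub_cancel' h] at h1
        refine h1.trans ?_
        calc 2 * min 2 (L * (D * θ ^ (j - l) * R)) ≤ M * ρ ^ (j - l) := hρt _
        _ = M * ρ ^ ((j - l) + (l - j)) := by rw [Nat.sub_eq_zero_of_le h, Nat.add_zero]
    have hprod_int : ∀ j l : ℕ,
        Integrable (fun ω => (starRingEnd ℂ) (g (X j ω)) * g (X l ω)) P := by
      intro j l
      refine ⟨((hgconjm.comp (hXm j)).mul (hgm.comp (hXm l))).aestronglyMeasurable,
        HasFiniteIntegral.of_bounded (C := 4) (ae_of_all _ fun ω => ?_)⟩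
      rw [norm_mul, RCLike.norm_conj]
      calc ‖g (X j ω)‖ * ‖g (X l ω)‖
          ≤ 2 * 2 := mul_le_mul (hgb _) (hgb _) (norm_nonneg _) (by norm_num)
      _ = 4 := by norm_num
    have hexp : ((∫ ω, ‖S ω‖ ^ 2 ∂P : ℝ) : ℂ)
        = ∑ j ∈ Finset.Icc 1 n, ∑ l ∈ Finset.Icc 1 n,
            ∫ ω, (starRingEnd ℂ) (g (X j ω)) * g (X l ω) ∂P := by
      rw [show ((∫ ω, ‖S ω‖ ^ 2 ∂P : ℝ) : ℂ)
          = ∫ ω, ((‖S ω‖ ^ 2 : ℝ) : ℂ) ∂P from integral_ofReal.symm]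
      have hpt : ∀ ω : Ω, ((‖S ω‖ ^ 2 : ℝ) : ℂ)
          = ∑ j ∈ Finset.Icc 1 n, ∑ l ∈ Finset.Icc 1 n,
              (starRingEnd ℂ) (g (X j ω)) * g (X l ω) := by
        intro ω
        have h1 : ((‖S ω‖ ^ 2 : ℝ) : ℂ) = (starRingEnd ℂ) (S ω) * S ω := by
          calc ((‖S ω‖ ^ 2 : ℝ) : ℂ) = ((Complex.normSq (S ω) : ℝ) : ℂ) := by
                rw [Complex.normSq_eq_norm_sq]
          _ = S ω * (starRingEnd ℂ) (S ω) := (Complex.mul_conj _).symm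
          _ = (starRingEnd ℂ) (S ω) * S ω := mul_comm _ _
        rw [h1, hSdef]
        simp only [map_sum]
        rw [Finset.sum_mul_sum]
      rw [integral_congr_ae (ae_of_all _ hpt),
        integral_finset_sum _ (fun j _ => integrable_finset_sum _ (fun l _ => hprod_int j l))]
      exact Finset.sum_congr rfl fun j _ => integral_finset_sum _ fun l _ => hprod_int j l
    have hSb : ∫ ω, ‖S ω‖ ^ 2 ∂P ≤ (n:ℝ) * (M * (2 * (1-ρ)⁻¹)) := by
      have h0 : ∫ ω, ‖S ω‖ ^ 2 ∂P
          = ‖((∫ ω, ‖S ω‖ ^ 2 ∂P : ℝ) : ℂ)‖ := by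
        rw [Complex.norm_real, Real.norm_eq_abs, abs_of_nonneg (integral_nonneg fun ω => by positivity)]
      rw [h0, hexp]
      calc ‖∑ j ∈ Finset.Icc 1 n, ∑ l ∈ Finset.Icc 1 n,
              ∫ ω, (starRingEnd ℂ) (g (X j ω)) * g (X l ω) ∂P‖
          ≤ ∑ j ∈ Finset.Icc 1 n, ‖∑ l ∈ Finset.Icc 1 n,
              ∫ ω, (starRingEnd ℂ) (g (X j ω)) * g (X l ω) ∂P‖ := norm_sum_le _ _
      _ ≤ ∑ j ∈ Finset.Icc 1 n, ∑ l ∈ Finset.Icc 1 n,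
              ‖∫ ω, (starRingEnd ℂ) (g (X j ω)) * g (X l ω) ∂P‖ :=
            Finset.sum_le_sum fun j _ => norm_sum_le _ _
      _ ≤ ∑ j ∈ Finset.Icc 1 n, ∑ l ∈ Finset.Icc 1 n, M * ρ ^ ((j - l) + (l - j)) := by
            refine Finset.sum_le_sum fun j hj => Finset.sum_le_sum fun l hl => ?_
            exact hcovfull j l hj hl
      _ ≤ ∑ _j ∈ Finset.Icc 1 n, M * (2 * (1-ρ)⁻¹) := by
            refine Finset.sum_le_sum fun j _ => ?_
            rw [← Finset.mul_sum]
            exact mul_le_mul_of_nonneg_left (sum_pow_dist_le hρ0 hρ1 n j) hM0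
      _ = (n:ℝ) * (M * (2 * (1-ρ)⁻¹)) := by
            rw [Finset.sum_const, Nat.card_Icc, Nat.add_sub_cancel, nsmul_eq_mul]
    have hfinal : ∫ ω, ‖(∫ x, fourierChar k x ∂(empMeasure X n ω)) - μf‖ ^ 2 ∂P
        = ((n:ℝ)⁻¹) ^ 2 * ∫ ω, ‖S ω‖ ^ 2 ∂P := by
      rw [← integral_const_mul]
      refine integral_congr_ae (ae_of_all _ fun ω => ?_)
      show ‖(∫ x, fourierChar k x ∂(empMeasure X n ω)) - μf‖ ^ 2
          = ((n:ℝ)⁻¹) ^ 2 * ‖S ω‖ ^ 2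
      rw [hemp ω]
      have hstep : (((n:ℝ)⁻¹ : ℝ) : ℂ) * (∑ j ∈ Finset.Icc 1 n, fourierChar k (X j ω)) - μf
          = (((n:ℝ)⁻¹ : ℝ) : ℂ) * S ω := by
        simp only [hSdef, hgdef]
        rw [Finset.sum_sub_distrib, mul_sub, Finset.sum_const, Nat.card_Icc,
          Nat.add_sub_cancel, nsmul_eq_mul, Complex.ofReal_inv, Complex.ofReal_natCast,
          ← mul_assoc, inv_mul_cancel₀ (by exact_mod_cast hnne : ((n:ℂ) ≠ 0)), one_mul]
      rw [hstep, norm_mul, Complex.norm_real, Real.norm_eq_abs,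
        abs_of_nonneg (by positivity : (0:ℝ) ≤ (n:ℝ)⁻¹), mul_pow]
    rw [hfinal]
    have hnum : 2 * M ≤ 8 * (1 + 4 * Real.pi * d) * D * (1 + R) * K ^ (2 * α) := by
      have hKle : K ^ α ≤ K ^ (2 * α) :=
        Real.rpow_le_rpow_of_exponent_le hK1 (by linarith)
      calc 2 * M = 8 * (1 + 4 * Real.pi * d) * D * (1 + R) * K ^ α := by rw [hMdef]; ring
      _ ≤ 8 * (1 + 4 * Real.pi * d) * D * (1 + R) * K ^ (2 * α) := by
          refine mul_le_mul_of_nonneg_left hKle ?_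
          positivity
    calc ((n:ℝ)⁻¹) ^ 2 * ∫ ω, ‖S ω‖ ^ 2 ∂P
        ≤ ((n:ℝ)⁻¹) ^ 2 * ((n:ℝ) * (M * (2 * (1-ρ)⁻¹))) :=
          mul_le_mul_of_nonneg_left hSb (by positivity)
    _ = 2 * M / ((1 - ρ) * n) := by
        field_simp
    _ ≤ 8 * (1 + 4 * Real.pi * d) * D * (1 + R) * K ^ (2 * α) / ((1 - ρ) * n) := by
        have hden : (0:ℝ) < (1 - ρ) * n := mul_pos h1ρ hnpos
        exact (div_le_div_iff_of_pos_right hden).mpr hnum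

end
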